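/- arXiv:2204.11342 — 2 statements merged into one kernel-verified Lean document; each statement's English description precedes it below -/
import Mathlib

section
/- Let K ⊂ ℝ^N be a compact set, let γ ∈ ℝ, and take the specific forcing term f(x,t) := (1+t)^{-γ} 𝟙_{K+B_1(0)}(x). Then there exist c > 0 and T ≥ 2 such that for all t ≥ T and all x ∈ K the mild solution u satisfies u(x,t) ≥ c ρ(t), where ρ(t) is given by: if N < 2β, ρ(t) = t^{-σ*+1-γ} for γ < 1, t^{-σ*} log t for γ = 1, t^{-σ*} for γ > 1; if N = 2β, ρ(t) = t^{-γ} log t for γ ≤ 1, t^{-1} for γ > 1; if 2β < N < 4β, ρ(t) = t^{-γ} for γ < σ*, t^{-σ*} for γ ≥ σ*; if N = 4β, ρ(t) = t^{-γ} for γ < 1 + α, t^{-(1+α)} log t for γ ≥ 1 + α. (This shows the compact-set upper estimates are sharp.) -/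
open MeasureTheory Real Set Pointwise
open scoped ENNReal

noncomputable section

/-- Euclidean space ℝ^N. -/
abbrev Euc (N : ℕ) : Type := EuclideanSpace ℝ (Fin N)

/-- The self-similarity exponent θ := α/(2β). -/
def thetaV (α β : ℝ) : ℝ := α / (2 * β)

/-- σ* := 1 - α + Nθ. -/
def sigmaStar (N : ℕ) (α β : ℝ) : ℝ := 1 - α + (N : ℝ) * thetaV α β

/-- σ(p) := σ* - Nθ/p (with σ(∞) = σ*, since (∞ : ℝ≥0∞).toReal = 0 and x/0 = 0). -/
def sigmaP (N : ℕ) (α β : ℝ) (p : ℝ≥0∞) : ℝ :=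
  sigmaStar N α β - (N : ℝ) * thetaV α β / p.toReal

/-- p ∈ [1,∞] is subcritical: p arbitrary if N < 2β, p < ∞ if N = 2β,
and p < p_c := N/(N-2β) if N > 2β. -/
def Subcritical (N : ℕ) (β : ℝ) (p : ℝ≥0∞) : Prop :=
  ((N : ℝ) < 2 * β) ∨ ((N : ℝ) = 2 * β ∧ p ≠ ∞) ∨
    (2 * β < (N : ℝ) ∧ p < ENNReal.ofReal ((N : ℝ) / ((N : ℝ) - 2 * β)))

/-- The kernel Y(x,t) := t^{-σ*} G(x t^{-θ}). -/
def kernelY (N : ℕ) (α β : ℝ) (G : Euc N → ℝ) (x : Euc N) (t : ℝ) : ℝ :=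
  t ^ (-(sigmaStar N α β)) * G ((t ^ (-(thetaV α β))) • x)

/-- The mild solution given by Duhamel's formula:
u(x,t) = ∫₀^t ∫_{ℝ^N} Y(x-y,t-s) f(y,s) dy ds. -/
def mildSol (N : ℕ) (α β : ℝ) (G : Euc N → ℝ) (f : Euc N → ℝ → ℝ) (x : Euc N) (t : ℝ) : ℝ :=
  ∫ s in Ioo (0 : ℝ) t, ∫ y, kernelY N α β G (x - y) (t - s) * f y s

/-!
Restrict Duhamel's integral to a time window `(a, b) ⊆ [0, t - 1]` and to the unit ball around
`x`, which lies in `K + B₁`; the rest of the integrand is nonnegative. There `t - s ≥ 1`, so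
`(t - s)^{-θ} (x - y)` stays in the unit ball, where `G ≥ c₁`; hence
`u(x,t) ≥ |B₁| c₁ ∫_a^b (t - s)^{-σ*} (1 + s)^{-γ} ds`. The whole integrand is integrable because
`G` is (it is `O(1 + |log |ξ||)` at `0` and `O(|ξ|^{-N-2β})` at infinity) and `Y(·, τ)` has mass
`τ^{α-1} ‖G‖₁`. Each rate then comes from one window: `(1, 2)` gives `t^{-σ*}`, and
`t^{-σ*} log t` when `N = 4β` since then `G ≥ c₁ θ log (t - s)` there; `(t - 2, t - 1)` gives
`t^{-γ}`; `(t/2, t - 1)` gives `t^{1-σ*-γ}`, and `t^{-γ} log t` when `σ* ≤ 1`; `(0, t/2)` gives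
`t^{-σ*} log t` when `γ ≤ 1`.
-/

open Filter Topology

section Integrability

variable {E : Type*} [NormedAddCommGroup E] [NormedSpace ℝ E] [FiniteDimensional ℝ E]
  [MeasurableSpace E] [BorelSpace E] {μ : Measure E} [μ.IsAddHaarMeasure]

theorem integrableOn_ball_one_add_abs_log_norm [Nontrivial E] :
    IntegrableOn (fun ξ : E => 1 + |log ‖ξ‖|) (Metric.ball 0 1) μ := by
  rw [integrableOn_fun_norm_addHaar μ (f := fun r => 1 + |log r|)]
  have hlog : IntegrableOn (fun r : ℝ => |log r|) (Ioo 0 1) :=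
    IntegrableOn.mono_set intervalIntegral.intervalIntegrable_log'.1.norm Ioo_subset_Ioc_self
  refine ((integrableOn_const measure_Ioo_lt_top.ne).add hlog).bdd_mul (c := 1) (by fun_prop) ?_
  filter_upwards [self_mem_ae_restrict measurableSet_Ioo] with r hr
  rw [norm_pow, Real.norm_of_nonneg hr.1.le]
  exact pow_le_one₀ hr.1.le hr.2.le

theorem integrableOn_compl_ball_rpow_neg_norm {ρ : ℝ} (hρ : (Module.finrank ℝ E : ℝ) < ρ) :
    IntegrableOn (fun ξ : E => ‖ξ‖ ^ (-ρ)) (Metric.ball 0 1)ᶜ μ := by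
  have hρ0 : 0 ≤ ρ := (Nat.cast_nonneg _).trans hρ.le
  refine ((integrable_one_add_norm hρ).const_mul (2 ^ ρ)).integrableOn.mono'
    (continuous_norm.measurable.pow_const _).aestronglyMeasurable ?_
  filter_upwards [self_mem_ae_restrict measurableSet_ball.compl] with ξ hξ
  have h1 : 1 ≤ ‖ξ‖ := by simpa using hξ
  rw [Real.norm_of_nonneg (by positivity)]
  calc ‖ξ‖ ^ (-ρ) = 2 ^ ρ * (2 * ‖ξ‖) ^ (-ρ) := by
        rw [Real.mul_rpow zero_le_two (by positivity), Real.rpow_neg zero_le_two, ← mul_assoc,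
          mul_inv_cancel₀ (by positivity), one_mul]
    _ ≤ 2 ^ ρ * (1 + ‖ξ‖) ^ (-ρ) := mul_le_mul_of_nonneg_left
        (Real.rpow_le_rpow_of_nonpos (by positivity) (by linarith) (by linarith)) (by positivity)

theorem integrable_of_norm_le_log_of_norm_le_rpow [Nontrivial E] {G : E → ℝ} {C ρ : ℝ}
    (hρ : (Module.finrank ℝ E : ℝ) < ρ) (hG : AEStronglyMeasurable G μ)
    (hin : ∀ ξ, ξ ≠ 0 → ‖ξ‖ ≤ 1 → ‖G ξ‖ ≤ C * (1 + |log ‖ξ‖|))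
    (hout : ∀ ξ, 1 ≤ ‖ξ‖ → ‖G ξ‖ ≤ C * ‖ξ‖ ^ (-ρ)) :
    Integrable G μ := by
  rw [← integrableOn_univ, ← union_compl_self (Metric.ball (0 : E) 1)]
  refine .union (((integrableOn_ball_one_add_abs_log_norm).const_mul C).mono' hG.restrict ?_)
    (((integrableOn_compl_ball_rpow_neg_norm hρ).const_mul C).mono' hG.restrict ?_)
  · filter_upwards [self_mem_ae_restrict measurableSet_ball, Measure.ae_ne (μ.restrict _) 0]
      with ξ hξ hξ0
    exact hin ξ hξ0 (by simpa using (mem_ball_zero_iff.1 hξ).le)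
  · filter_upwards [self_mem_ae_restrict measurableSet_ball.compl] with ξ hξ
    exact hout ξ (by simpa using hξ)

end Integrability

section Kernel

variable {N : ℕ} {α β : ℝ} {G : Euc N → ℝ}

theorem integral_kernelY_sub (x : Euc N) {τ : ℝ} (hτ : 0 < τ) :
    ∫ y, kernelY N α β G (x - y) τ = τ ^ (α - 1) * ∫ ξ, G ξ := by
  simp only [kernelY]
  rw [integral_const_mul, integral_sub_left_eq_self (fun z => G (τ ^ (-thetaV α β) • z)),
    Measure.integral_comp_smul, finrank_euclideanSpace_fin, smul_eq_mul, ← mul_assoc,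
    ← Real.rpow_natCast, ← Real.rpow_mul hτ.le, abs_inv,
    abs_of_pos (Real.rpow_pos_of_pos hτ _), ← Real.rpow_neg hτ.le, ← Real.rpow_add hτ]
  congr 2
  simp only [sigmaStar]
  ring

theorem integrable_kernelY_sub (hG : Integrable G) (x : Euc N) {τ : ℝ} (hτ : 0 < τ) :
    Integrable fun y => kernelY N α β G (x - y) τ :=
  (((integrable_comp_smul_iff volume G (Real.rpow_pos_of_pos hτ _).ne').2 hG).comp_sub_left
    x).const_mul _

theorem kernelY_nonneg (hG : ∀ ξ, ξ ≠ 0 → 0 ≤ G ξ) {z : Euc N} (hz : z ≠ 0) {τ : ℝ}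
    (hτ : 0 < τ) : 0 ≤ kernelY N α β G z τ :=
  mul_nonneg (Real.rpow_nonneg hτ.le _) (hG _ (smul_ne_zero (Real.rpow_pos_of_pos hτ _).ne' hz))

theorem norm_kernelY {z : Euc N} {τ : ℝ} (hτ : 0 < τ) :
    ‖kernelY N α β G z τ‖ = kernelY N α β (‖G ·‖) z τ := by
  simp only [kernelY, norm_mul, Real.norm_of_nonneg (Real.rpow_nonneg hτ.le _)]

end Kernel

section RealAnalysis

variable {a b t σ γ : ℝ}

theorem integrableOn_Ioo_rpow_sub {e : ℝ} (he : -1 < e) :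
    IntegrableOn (fun s => (t - s) ^ e) (Ioo 0 t) := by
  rcases le_total t 0 with ht | ht
  · simp [Ioo_eq_empty_of_le ht]
  have h := (intervalIntegral.intervalIntegrable_rpow' he (a := 0) (b := t)).comp_sub_left t
  rw [sub_zero, sub_self] at h
  exact (intervalIntegrable_iff_integrableOn_Ioo_of_le ht).1 h.symm

theorem rpow_le_max_of_mem_Icc {u e : ℝ} (ha : 0 < a) (hu : u ∈ Icc a b) :
    u ^ e ≤ max (a ^ e) (b ^ e) := by
  rcases le_total 0 e with he | he
  · exact le_max_of_le_right (Real.rpow_le_rpow (ha.le.trans hu.1) hu.2 he)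
  · exact le_max_of_le_left (Real.rpow_le_rpow_of_nonpos ha hu.1 he)

theorem min_le_rpow_of_mem_Icc {u e : ℝ} (ha : 0 < a) (hu : u ∈ Icc a b) :
    min (a ^ e) (b ^ e) ≤ u ^ e := by
  rcases le_total 0 e with he | he
  · exact min_le_of_left_le (Real.rpow_le_rpow ha.le hu.1 he)
  · exact min_le_of_right_le (Real.rpow_le_rpow_of_nonpos (ha.trans_le hu.1) hu.2 he)

theorem min_mul_rpow_neg_le {u : ℝ} (ht : 0 < t) (hu : u ∈ Icc (t / 2) t) :
    min (2 ^ γ) 1 * t ^ (-γ) ≤ u ^ (-γ) := by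
  calc min (2 ^ γ) 1 * t ^ (-γ) = min ((t / 2) ^ (-γ)) (t ^ (-γ)) := by
        rw [min_mul_of_nonneg _ _ (Real.rpow_nonneg ht.le _), one_mul,
          Real.div_rpow ht.le zero_le_two, Real.rpow_neg zero_le_two, div_inv_eq_mul, mul_comm]
    _ ≤ u ^ (-γ) := min_le_rpow_of_mem_Icc (half_pos ht) hu

theorem log_div_two_le_log_half (ht : 4 ≤ t) : log t / 2 ≤ log (t / 2) := by
  rw [Real.log_div (by positivity) two_ne_zero]
  have : 2 * log 2 ≤ log t := by
    rw [← Real.log_rpow two_pos]; exact Real.log_le_log (by positivity) (by norm_num; linarith)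
  linarith

theorem mul_sub_le_intervalIntegral_of_le {f : ℝ → ℝ} {m : ℝ} (hab : a ≤ b)
    (hf : ContinuousOn f (Icc a b)) (hm : ∀ s ∈ Icc a b, m ≤ f s) :
    m * (b - a) ≤ ∫ s in a..b, f s := by
  rw [mul_comm, ← smul_eq_mul, ← intervalIntegral.integral_const]
  exact intervalIntegral.integral_mono_on hab intervalIntegrable_const
    (hf.intervalIntegrable_of_Icc hab) hm

theorem continuousOn_sub_rpow_mul_one_add_rpow (ha : -1 < a) (hbt : b < t) :
    ContinuousOn (fun s => (t - s) ^ (-σ) * (1 + s) ^ (-γ)) (Icc a b) := by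
  refine .mul ?_ ?_ <;> refine .rpow_const (by fun_prop) fun s hs => .inl ?_ <;>
    linarith [hs.1, hs.2]

theorem integral_one_add_inv (hb : 0 ≤ b) : ∫ s in (0 : ℝ)..b, (1 + s)⁻¹ = log (1 + b) := by
  rw [intervalIntegral.integral_comp_add_left (fun s => s⁻¹), add_zero, integral_inv, div_one]
  rw [uIcc_of_le (by linarith)]
  exact fun h => by linarith [h.1]

theorem integral_sub_inv (hab : a ≤ b) (hbt : b < t) :
    ∫ s in a..b, (t - s)⁻¹ = log ((t - a) / (t - b)) := by
  rw [intervalIntegral.integral_comp_sub_left (fun s => s⁻¹), integral_inv]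
  rw [uIcc_of_le (by linarith)]
  exact fun h => by linarith [h.1]

end RealAnalysis

section Duhamel

variable {N : ℕ} {α β : ℝ} {G : Euc N → ℝ}

structure IsAdmissibleProfile (G : Euc N → ℝ) : Prop where
  measurable : Measurable G
  integrable : Integrable G
  nonneg : ∀ ξ, ξ ≠ 0 → 0 ≤ G ξ

theorem integrableOn_integral_kernelY_mul (hα : 0 < α) (hGm : Measurable G)
    (hGi : Integrable G) {f : Euc N → ℝ → ℝ} (hf : Measurable (Function.uncurry f)) {t A : ℝ}
    (hfA : ∀ y, ∀ s ∈ Ioo 0 t, ‖f y s‖ ≤ A) (x : Euc N) :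
    IntegrableOn (fun s => ∫ y, kernelY N α β G (x - y) (t - s) * f y s) (Ioo 0 t) := by
  have hmeas :
      Measurable fun p : ℝ × Euc N => kernelY N α β G (x - p.2) (t - p.1) * f p.2 p.1 := by
    have : Measurable fun p : ℝ × Euc N => f p.2 p.1 := hf.comp measurable_swap
    unfold kernelY
    fun_prop
  refine ((integrableOn_Ioo_rpow_sub (by linarith : -1 < α - 1)).const_mul
    (A * ∫ ξ, ‖G ξ‖)).mono' hmeas.stronglyMeasurable.integral_prod_right'.aestronglyMeasurable ?_
  filter_upwards [self_mem_ae_restrict measurableSet_Ioo] with s hs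
  have hts : 0 < t - s := sub_pos.2 hs.2
  calc ‖∫ y, kernelY N α β G (x - y) (t - s) * f y s‖
      ≤ ∫ y, A * kernelY N α β (‖G ·‖) (x - y) (t - s) := by
        refine norm_integral_le_of_norm_le ((integrable_kernelY_sub hGi.norm x hts).const_mul A)
          (.of_forall fun y => ?_)
        rw [norm_mul, norm_kernelY hts, mul_comm]
        exact mul_le_mul_of_nonneg_right (hfA y s hs) ((norm_nonneg _).trans_eq (norm_kernelY hts))
    _ = (A * ∫ ξ, ‖G ξ‖) * (t - s) ^ (α - 1) := by
        rw [integral_const_mul, integral_kernelY_sub x hts]; ring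

theorem ae_nonneg_kernelY_sub_mul [NeZero N] (hG : ∀ ξ, ξ ≠ 0 → 0 ≤ G ξ) {f : Euc N → ℝ}
    (hf : ∀ y, 0 ≤ f y) (x : Euc N) {τ : ℝ} (hτ : 0 < τ) :
    0 ≤ᵐ[volume] fun y => kernelY N α β G (x - y) τ * f y := by
  filter_upwards [Measure.ae_ne volume x] with y hy
  exact mul_nonneg (kernelY_nonneg hG (sub_ne_zero.2 hy.symm) hτ) (hf y)

theorem setIntegral_le_mildSol [NeZero N] (hα : 0 < α) (hG : IsAdmissibleProfile G)
    {f : Euc N → ℝ → ℝ} (hf : Measurable (Function.uncurry f)) {t A : ℝ}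
    (hf0 : ∀ y, ∀ s ∈ Ioo 0 t, 0 ≤ f y s) (hfA : ∀ y, ∀ s ∈ Ioo 0 t, ‖f y s‖ ≤ A) (x : Euc N)
    {a b : ℝ} (hab : Ioo a b ⊆ Ioo 0 t) :
    ∫ s in Ioo a b, ∫ y, kernelY N α β G (x - y) (t - s) * f y s ≤ mildSol N α β G f x t := by
  refine setIntegral_mono_set
    (integrableOn_integral_kernelY_mul hα hG.measurable hG.integrable hf hfA x) ?_
    hab.eventuallyLE
  filter_upwards [self_mem_ae_restrict measurableSet_Ioo] with s hs
  exact integral_nonneg_of_ae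
    (ae_nonneg_kernelY_sub_mul hG.nonneg (fun y => hf0 y s hs) x (sub_pos.2 hs.2))

end Duhamel

section DecayForcing

variable {N : ℕ} {α β : ℝ} {G : Euc N → ℝ} {W : Set (Euc N)}

def decayForcing (W : Set (Euc N)) (γ : ℝ) (y : Euc N) (s : ℝ) : ℝ :=
  W.indicator (fun _ => (1 + s) ^ (-γ)) y

theorem measurable_decayForcing (hW : MeasurableSet W) (γ : ℝ) :
    Measurable (Function.uncurry (decayForcing W γ)) :=
  Measurable.indicator (by fun_prop) (hW.preimage measurable_fst)

theorem decayForcing_nonneg (W : Set (Euc N)) (γ : ℝ) (y : Euc N) {s : ℝ} (hs : 0 ≤ s) :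
    0 ≤ decayForcing W γ y s :=
  indicator_nonneg (fun _ _ => Real.rpow_nonneg (by linarith) _) y

theorem norm_decayForcing_le (W : Set (Euc N)) (γ : ℝ) (y : Euc N) {s t : ℝ}
    (hs : s ∈ Icc 0 t) : ‖decayForcing W γ y s‖ ≤ max 1 ((1 + t) ^ (-γ)) := by
  rw [Real.norm_of_nonneg (decayForcing_nonneg W γ y hs.1)]
  refine (indicator_le_self' (fun _ _ => Real.rpow_nonneg (by linarith [hs.1]) _) y).trans ?_
  simpa using rpow_le_max_of_mem_Icc (e := -γ) one_pos
    (show 1 + s ∈ Icc 1 (1 + t) from ⟨by linarith [hs.1], by linarith [hs.2]⟩)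

theorem mul_le_integral_kernelY_mul_decayForcing [NeZero N] (hG : IsAdmissibleProfile G)
    (hW : MeasurableSet W) {x : Euc N} (hxW : Metric.ball x 1 ⊆ W) (γ : ℝ) {s t m : ℝ}
    (hs : 0 ≤ s) (hst : s < t)
    (hm : ∀ z : Euc N, z ≠ 0 → ‖z‖ < 1 → m ≤ G ((t - s) ^ (-thetaV α β) • z)) :
    volume.real (Metric.ball (0 : Euc N) 1) * m
        * ((t - s) ^ (-sigmaStar N α β) * (1 + s) ^ (-γ))
      ≤ ∫ y, kernelY N α β G (x - y) (t - s) * decayForcing W γ y s := by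
  have hts : 0 < t - s := sub_pos.2 hst
  have hint : Integrable fun y => kernelY N α β G (x - y) (t - s) * decayForcing W γ y s :=
    (integrable_kernelY_sub hG.integrable x hts).mul_bdd
      ((measurable_decayForcing hW γ).comp
        (measurable_id.prodMk measurable_const)).aestronglyMeasurable
      (.of_forall fun y => norm_decayForcing_le W γ y ⟨hs, hst.le⟩)
  calc volume.real (Metric.ball (0 : Euc N) 1) * m
        * ((t - s) ^ (-sigmaStar N α β) * (1 + s) ^ (-γ))
      = ∫ _ in Metric.ball x 1, m * ((t - s) ^ (-sigmaStar N α β) * (1 + s) ^ (-γ)) := by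
        rw [setIntegral_const, Measure.addHaar_real_ball_center volume x, smul_eq_mul, mul_assoc]
    _ ≤ ∫ y in Metric.ball x 1, kernelY N α β G (x - y) (t - s) * decayForcing W γ y s := by
        refine setIntegral_mono_on_ae (integrableOn_const measure_ball_lt_top.ne)
          hint.integrableOn measurableSet_ball ?_
        filter_upwards [Measure.ae_ne volume x] with y hyx hy
        have hG := hm (x - y) (sub_ne_zero.2 hyx.symm) (by rwa [← dist_eq_norm, dist_comm])
        rw [kernelY, decayForcing, indicator_of_mem (hxW hy)]
        calc m * ((t - s) ^ (-sigmaStar N α β) * (1 + s) ^ (-γ))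
            = (t - s) ^ (-sigmaStar N α β) * m * (1 + s) ^ (-γ) := by ring
          _ ≤ _ := by gcongr
    _ ≤ ∫ y, kernelY N α β G (x - y) (t - s) * decayForcing W γ y s :=
        setIntegral_le_integral hint
          (ae_nonneg_kernelY_sub_mul hG.nonneg (fun y => decayForcing_nonneg W γ y hs) x hts)

theorem mul_intervalIntegral_le_mildSol [NeZero N] (hα : 0 < α) (hG : IsAdmissibleProfile G)
    (hW : MeasurableSet W) {x : Euc N} (hxW : Metric.ball x 1 ⊆ W) (γ : ℝ) {t a b m : ℝ}
    (ha : 0 ≤ a) (hab : a ≤ b) (hbt : b < t)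
    (hm : ∀ s ∈ Ioo a b, ∀ z : Euc N, z ≠ 0 → ‖z‖ < 1 → m ≤ G ((t - s) ^ (-thetaV α β) • z)) :
    volume.real (Metric.ball (0 : Euc N) 1) * m
        * ∫ s in a..b, (t - s) ^ (-sigmaStar N α β) * (1 + s) ^ (-γ)
      ≤ mildSol N α β G (decayForcing W γ) x t := by
  have hsub : Ioo a b ⊆ Ioo 0 t := Ioo_subset_Ioo ha hbt.le
  have hbound : ∀ y, ∀ s ∈ Ioo 0 t, ‖decayForcing W γ y s‖ ≤ max 1 ((1 + t) ^ (-γ)) :=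
    fun y s hs => norm_decayForcing_le W γ y (Ioo_subset_Icc_self hs)
  have hweight := (continuousOn_sub_rpow_mul_one_add_rpow (σ := sigmaStar N α β) (γ := γ)
    (show -1 < a by linarith) hbt).integrableOn_Icc (μ := volume).mono_set Ioo_subset_Icc_self
  rw [intervalIntegral.integral_of_le hab, integral_Ioc_eq_integral_Ioo, ← integral_const_mul]
  calc ∫ s in Ioo a b, volume.real (Metric.ball (0 : Euc N) 1) * m
          * ((t - s) ^ (-sigmaStar N α β) * (1 + s) ^ (-γ))
      ≤ ∫ s in Ioo a b, ∫ y, kernelY N α β G (x - y) (t - s) * decayForcing W γ y s :=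
        setIntegral_mono_on (hweight.const_mul _)
          ((integrableOn_integral_kernelY_mul hα hG.measurable hG.integrable
            (measurable_decayForcing hW γ) hbound x).mono_set hsub) measurableSet_Ioo
          fun s hs => mul_le_integral_kernelY_mul_decayForcing hG hW hxW γ (ha.trans hs.1.le)
            (hs.2.trans hbt) (hm s hs)
    _ ≤ mildSol N α β G (decayForcing W γ) x t :=
        setIntegral_le_mildSol hα hG (measurable_decayForcing hW γ)
          (fun y s hs => decayForcing_nonneg W γ y hs.1.le) hbound x hsub

end DecayForcing

section MemoryIntegral

variable {σ γ t : ℝ}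

theorem min_mul_rpow_le_integral_one_two (hσ : 0 ≤ σ) (ht : 3 ≤ t) :
    min (2 ^ (-γ)) (3 ^ (-γ)) * t ^ (-σ)
      ≤ ∫ s in (1 : ℝ)..2, (t - s) ^ (-σ) * (1 + s) ^ (-γ) := by
  have h := mul_sub_le_intervalIntegral_of_le (m := min (2 ^ (-γ)) (3 ^ (-γ)) * t ^ (-σ))
    one_le_two (continuousOn_sub_rpow_mul_one_add_rpow (σ := σ) (γ := γ) (by norm_num)
      (by linarith)) fun s hs => by
      rw [mul_comm]
      exact mul_le_mul
        (Real.rpow_le_rpow_of_nonpos (by linarith [hs.2]) (by linarith [hs.1]) (neg_nonpos.2 hσ))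
        (min_le_rpow_of_mem_Icc two_pos ⟨by linarith [hs.1], by linarith [hs.2]⟩)
        (by positivity) (Real.rpow_nonneg (by linarith [hs.2]) _)
  norm_num at h
  exact h

theorem rpow_mul_min_mul_rpow_le_integral_sub_two_sub_one (hσ : 0 ≤ σ) (ht : 4 ≤ t) :
    2 ^ (-σ) * (min (2 ^ γ) 1 * t ^ (-γ))
      ≤ ∫ s in (t - 2)..(t - 1), (t - s) ^ (-σ) * (1 + s) ^ (-γ) := by
  have h := mul_sub_le_intervalIntegral_of_le (a := t - 2) (b := t - 1)
    (m := 2 ^ (-σ) * (min (2 ^ γ) 1 * t ^ (-γ))) (by linarith)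
    (continuousOn_sub_rpow_mul_one_add_rpow (σ := σ) (γ := γ) (by linarith) (by linarith))
    fun s hs => mul_le_mul
      (Real.rpow_le_rpow_of_nonpos (by linarith [hs.2]) (by linarith [hs.1]) (neg_nonpos.2 hσ))
      (min_mul_rpow_neg_le (by linarith) ⟨by linarith [hs.1], by linarith [hs.2]⟩)
      (by positivity) (Real.rpow_nonneg (by linarith [hs.2]) _)
  rwa [show t - 1 - (t - 2) = 1 by ring, mul_one] at h

theorem min_mul_rpow_le_integral_half_sub_one (hσ : 0 ≤ σ) (ht : 4 ≤ t) :
    min (2 ^ γ) 1 / 4 * t ^ (-σ + 1 - γ)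
      ≤ ∫ s in (t / 2)..(t - 1), (t - s) ^ (-σ) * (1 + s) ^ (-γ) := by
  have ht0 : 0 < t := by linarith
  have h := mul_sub_le_intervalIntegral_of_le (a := t / 2) (b := t - 1)
    (m := t ^ (-σ) * (min (2 ^ γ) 1 * t ^ (-γ))) (by linarith)
    (continuousOn_sub_rpow_mul_one_add_rpow (σ := σ) (γ := γ) (by linarith) (by linarith))
    fun s hs => mul_le_mul
      (Real.rpow_le_rpow_of_nonpos (by linarith [hs.2]) (by linarith [hs.1]) (neg_nonpos.2 hσ))
      (min_mul_rpow_neg_le ht0 ⟨by linarith [hs.1], by linarith [hs.2]⟩)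
      (by positivity) (Real.rpow_nonneg (by linarith [hs.2]) _)
  calc min (2 ^ γ) 1 / 4 * t ^ (-σ + 1 - γ)
      = t ^ (-σ) * (min (2 ^ γ) 1 * t ^ (-γ)) * (t / 4) := by
        rw [Real.rpow_sub ht0, Real.rpow_add ht0, Real.rpow_one, Real.rpow_neg ht0.le γ]
        field_simp
    _ ≤ t ^ (-σ) * (min (2 ^ γ) 1 * t ^ (-γ)) * (t - 1 - t / 2) := by gcongr; linarith
    _ ≤ _ := h

theorem rpow_mul_log_le_integral_zero_half (hσ : 0 ≤ σ) (hγ : γ ≤ 1) (ht : 4 ≤ t) :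
    t ^ (-σ) * (log t / 2) ≤ ∫ s in (0 : ℝ)..(t / 2), (t - s) ^ (-σ) * (1 + s) ^ (-γ) := by
  calc t ^ (-σ) * (log t / 2) ≤ t ^ (-σ) * log (1 + t / 2) := by
        gcongr
        exact (log_div_two_le_log_half ht).trans (Real.log_le_log (by positivity) (by linarith))
    _ = ∫ s in (0 : ℝ)..(t / 2), t ^ (-σ) * (1 + s)⁻¹ := by
        rw [intervalIntegral.integral_const_mul, integral_one_add_inv (by positivity)]
    _ ≤ _ := by
      refine intervalIntegral.integral_mono_on (by positivity)
        (ContinuousOn.intervalIntegrable_of_Icc (by positivity)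
          (by fun_prop (disch := intro s hs; linarith [hs.1])))
        ((continuousOn_sub_rpow_mul_one_add_rpow (by norm_num)
          (by linarith)).intervalIntegrable_of_Icc (by positivity)) fun s hs => ?_
      rw [← Real.rpow_neg_one]
      exact mul_le_mul
        (Real.rpow_le_rpow_of_nonpos (by linarith [hs.2]) (by linarith [hs.1]) (neg_nonpos.2 hσ))
        (Real.rpow_le_rpow_of_exponent_le (by linarith [hs.1]) (by linarith))
        (Real.rpow_nonneg (by linarith [hs.1]) _) (Real.rpow_nonneg (by linarith [hs.2]) _)

theorem min_mul_rpow_mul_log_le_integral_half_sub_one (hσ : σ ≤ 1) (ht : 4 ≤ t) :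
    min (2 ^ γ) 1 * t ^ (-γ) * (log t / 2)
      ≤ ∫ s in (t / 2)..(t - 1), (t - s) ^ (-σ) * (1 + s) ^ (-γ) := by
  calc min (2 ^ γ) 1 * t ^ (-γ) * (log t / 2)
      ≤ min (2 ^ γ) 1 * t ^ (-γ) * log (t / 2) := by
        gcongr
        exact log_div_two_le_log_half ht
    _ = ∫ s in (t / 2)..(t - 1), min (2 ^ γ) 1 * t ^ (-γ) * (t - s)⁻¹ := by
        rw [intervalIntegral.integral_const_mul, integral_sub_inv (by linarith) (by linarith),
          sub_sub_cancel, sub_half, div_one]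
    _ ≤ _ := by
      refine intervalIntegral.integral_mono_on (by linarith)
        (ContinuousOn.intervalIntegrable_of_Icc (by linarith)
          (by fun_prop (disch := intro s hs; linarith [hs.2])))
        ((continuousOn_sub_rpow_mul_one_add_rpow (by linarith)
          (by linarith)).intervalIntegrable_of_Icc (by linarith)) fun s hs => ?_
      rw [← Real.rpow_neg_one, mul_comm]
      exact mul_le_mul
        (Real.rpow_le_rpow_of_exponent_le (by linarith [hs.2]) (by linarith))
        (min_mul_rpow_neg_le (by linarith) ⟨by linarith [hs.1], by linarith [hs.2]⟩)
        (by positivity) (Real.rpow_nonneg (by linarith [hs.2]) _)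

end MemoryIntegral

section ProfileLowerBound

variable {E : Type*} [NormedAddCommGroup E] [NormedSpace ℝ E] {G : E → ℝ} {θ τ : ℝ} {z : E}

theorem rpow_neg_smul_ne_zero_and_norm_le (hθ : 0 ≤ θ) (hτ : 1 ≤ τ) (hz : z ≠ 0)
    (hz1 : ‖z‖ < 1) : τ ^ (-θ) • z ≠ 0 ∧ ‖τ ^ (-θ) • z‖ ≤ 1 := by
  have hτθ : 0 < τ ^ (-θ) := Real.rpow_pos_of_pos (by linarith) _
  refine ⟨smul_ne_zero hτθ.ne' hz, ?_⟩
  rw [norm_smul, Real.norm_of_nonneg hτθ.le]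
  exact mul_le_one₀ (Real.rpow_le_one_of_one_le_of_nonpos hτ (neg_nonpos.2 hθ)) (norm_nonneg _)
    hz1.le

theorem le_apply_rpow_neg_smul {c : ℝ} (hG : ∀ ξ, ξ ≠ 0 → ‖ξ‖ ≤ 1 → c ≤ G ξ) (hθ : 0 ≤ θ)
    (hτ : 1 ≤ τ) (hz : z ≠ 0) (hz1 : ‖z‖ < 1) : c ≤ G (τ ^ (-θ) • z) :=
  hG _ (rpow_neg_smul_ne_zero_and_norm_le hθ hτ hz hz1).1
    (rpow_neg_smul_ne_zero_and_norm_le hθ hτ hz hz1).2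

theorem mul_log_le_apply_rpow_neg_smul {c : ℝ} (hc : 0 ≤ c)
    (hG : ∀ ξ, ξ ≠ 0 → ‖ξ‖ ≤ 1 → c * (1 + |log ‖ξ‖|) ≤ G ξ) (hθ : 0 ≤ θ) (hτ : 1 ≤ τ)
    (hz : z ≠ 0) (hz1 : ‖z‖ < 1) : c * (θ * log τ) ≤ G (τ ^ (-θ) • z) := by
  obtain ⟨hz0, hzn⟩ := rpow_neg_smul_ne_zero_and_norm_le hθ hτ hz hz1
  refine le_trans ?_ (hG _ hz0 hzn)
  have hlog : log ‖τ ^ (-θ) • z‖ ≤ -(θ * log τ) := by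
    rw [norm_smul, Real.norm_of_nonneg (Real.rpow_nonneg (by linarith) _),
      Real.log_mul (Real.rpow_pos_of_pos (by linarith) _).ne' (norm_ne_zero_iff.2 hz),
      Real.log_rpow (by linarith)]
    linarith [Real.log_nonpos (norm_nonneg z) hz1.le]
  gcongr
  linarith [neg_le_abs (log ‖τ ^ (-θ) • z‖)]

end ProfileLowerBound

section Exponents

variable {N : ℕ} {α β : ℝ}

theorem thetaV_pos (hα : 0 < α) (hβ : 0 < β) : 0 < thetaV α β :=
  div_pos hα (by linarith)

theorem sigmaStar_pos (hα : α < 1) (hθ : 0 ≤ thetaV α β) : 0 < sigmaStar N α β := by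
  have := mul_nonneg (Nat.cast_nonneg N) hθ
  unfold sigmaStar
  linarith

theorem sigmaStar_eq_one (hβ : 0 < β) (h : (N : ℝ) = 2 * β) : sigmaStar N α β = 1 := by
  unfold sigmaStar thetaV
  rw [h]
  field_simp
  ring

theorem sigmaStar_eq_one_add (hβ : 0 < β) (h : (N : ℝ) = 4 * β) :
    sigmaStar N α β = 1 + α := by
  unfold sigmaStar thetaV
  rw [h]
  field_simp
  ring

end Exponents

section LowerRates

variable {N : ℕ} {α β : ℝ}

/-- Asking the bound of all small `c > 0` lets finitely many rates share one constant. -/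
def IsLowerRate (u : Euc N → ℝ → ℝ) (W : Set (Euc N)) (ρ : ℝ → ℝ) : Prop :=
  ∀ᶠ c in 𝓝[>] (0 : ℝ), ∀ t ≥ (16 : ℝ), ∀ x, Metric.ball x 1 ⊆ W → c * ρ t ≤ u x t

theorem IsLowerRate.of_forall {u : Euc N → ℝ → ℝ} {W : Set (Euc N)} {ρ : ℝ → ℝ} {c₀ : ℝ}
    (hc₀ : 0 < c₀) (hρ : ∀ t ≥ (16 : ℝ), 0 ≤ ρ t)
    (h : ∀ t ≥ (16 : ℝ), ∀ x, Metric.ball x 1 ⊆ W → c₀ * ρ t ≤ u x t) :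
    IsLowerRate u W ρ := by
  filter_upwards [Ioc_mem_nhdsGT hc₀] with c hc t ht x hx
  exact (mul_le_mul_of_nonneg_right hc.2 (hρ t ht)).trans (h t ht x hx)

theorem volume_real_ball_pos (N : ℕ) : 0 < volume.real (Metric.ball (0 : Euc N) 1) :=
  ENNReal.toReal_pos (Metric.measure_ball_pos volume 0 one_pos).ne' measure_ball_lt_top.ne

variable [NeZero N] {G : Euc N → ℝ} {c₁ : ℝ} {W : Set (Euc N)}

theorem isLowerRate_of_le_mul_integral (hα : 0 < α) (hG : IsAdmissibleProfile G)
    (hW : MeasurableSet W) (γ : ℝ) {ρ a b m : ℝ → ℝ} {k : ℝ} (hk : 0 < k)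
    (hρ : ∀ t ≥ (16 : ℝ), 0 ≤ ρ t) (hab : ∀ t ≥ (16 : ℝ), 0 ≤ a t ∧ a t ≤ b t ∧ b t < t)
    (hm : ∀ t ≥ (16 : ℝ), ∀ s ∈ Ioo (a t) (b t), ∀ z : Euc N, z ≠ 0 → ‖z‖ < 1 →
      m t ≤ G ((t - s) ^ (-thetaV α β) • z))
    (hkm : ∀ t ≥ (16 : ℝ),
      k * ρ t ≤ m t * ∫ s in a t..b t, (t - s) ^ (-sigmaStar N α β) * (1 + s) ^ (-γ)) :
    IsLowerRate (mildSol N α β G (decayForcing W γ)) W ρ := by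
  refine .of_forall (mul_pos (volume_real_ball_pos N) hk) hρ fun t ht x hx => ?_
  obtain ⟨ha, hab, hb⟩ := hab t ht
  calc volume.real (Metric.ball (0 : Euc N) 1) * k * ρ t
      = volume.real (Metric.ball (0 : Euc N) 1) * (k * ρ t) := mul_assoc _ _ _
    _ ≤ volume.real (Metric.ball (0 : Euc N) 1)
          * (m t * ∫ s in a t..b t, (t - s) ^ (-sigmaStar N α β) * (1 + s) ^ (-γ)) :=
        mul_le_mul_of_nonneg_left (hkm t ht) (volume_real_ball_pos N).le
    _ ≤ _ := (mul_assoc _ _ _).symm.trans_le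
        (mul_intervalIntegral_le_mildSol hα hG hW hx γ ha hab hb (hm t ht))

theorem isLowerRate_rpow_neg_sigmaStar (hα : 0 < α) (hθ : 0 ≤ thetaV α β)
    (hσ : 0 ≤ sigmaStar N α β) (hG : IsAdmissibleProfile G) (hc₁ : 0 < c₁)
    (hGc : ∀ ξ, ξ ≠ 0 → ‖ξ‖ ≤ 1 → c₁ ≤ G ξ) (hW : MeasurableSet W) (γ : ℝ) :
    IsLowerRate (mildSol N α β G (decayForcing W γ)) W (fun t => t ^ (-sigmaStar N α β)) :=
  isLowerRate_of_le_mul_integral hα hG hW γ (a := fun _ => 1) (b := fun _ => 2)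
    (k := c₁ * min (2 ^ (-γ)) (3 ^ (-γ))) (by positivity)
    (fun t ht => by positivity) (fun t ht => ⟨zero_le_one, one_le_two, by linarith⟩)
    (fun t ht s hs z hz hz1 =>
      le_apply_rpow_neg_smul hGc hθ (by linarith [hs.2]) hz hz1)
    fun t ht => by
      calc c₁ * min (2 ^ (-γ)) (3 ^ (-γ)) * t ^ (-sigmaStar N α β)
          = c₁ * (min (2 ^ (-γ)) (3 ^ (-γ)) * t ^ (-sigmaStar N α β)) := mul_assoc _ _ _
        _ ≤ _ := mul_le_mul_of_nonneg_left
          (min_mul_rpow_le_integral_one_two hσ (by linarith)) hc₁.le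

theorem isLowerRate_rpow_neg (hα : 0 < α) (hθ : 0 ≤ thetaV α β) (hσ : 0 ≤ sigmaStar N α β)
    (hG : IsAdmissibleProfile G) (hc₁ : 0 < c₁) (hGc : ∀ ξ, ξ ≠ 0 → ‖ξ‖ ≤ 1 → c₁ ≤ G ξ)
    (hW : MeasurableSet W) (γ : ℝ) :
    IsLowerRate (mildSol N α β G (decayForcing W γ)) W (fun t => t ^ (-γ)) :=
  isLowerRate_of_le_mul_integral hα hG hW γ (a := fun t => t - 2) (b := fun t => t - 1)
    (k := c₁ * (2 ^ (-sigmaStar N α β) * min (2 ^ γ) 1)) (by positivity)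
    (fun t ht => by positivity) (fun t ht => ⟨by linarith, by linarith, by linarith⟩)
    (fun t ht s hs z hz hz1 =>
      le_apply_rpow_neg_smul hGc hθ (by linarith [hs.2]) hz hz1)
    fun t ht => by
      calc c₁ * (2 ^ (-sigmaStar N α β) * min (2 ^ γ) 1) * t ^ (-γ)
          = c₁ * (2 ^ (-sigmaStar N α β) * (min (2 ^ γ) 1 * t ^ (-γ))) := by ring
        _ ≤ _ := mul_le_mul_of_nonneg_left
          (rpow_mul_min_mul_rpow_le_integral_sub_two_sub_one hσ (by linarith)) hc₁.le

theorem isLowerRate_rpow (hα : 0 < α) (hθ : 0 ≤ thetaV α β) (hσ : 0 ≤ sigmaStar N α β)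
    (hG : IsAdmissibleProfile G) (hc₁ : 0 < c₁) (hGc : ∀ ξ, ξ ≠ 0 → ‖ξ‖ ≤ 1 → c₁ ≤ G ξ)
    (hW : MeasurableSet W) (γ : ℝ) :
    IsLowerRate (mildSol N α β G (decayForcing W γ)) W
      (fun t => t ^ (-sigmaStar N α β + 1 - γ)) :=
  isLowerRate_of_le_mul_integral hα hG hW γ (a := fun t => t / 2) (b := fun t => t - 1)
    (k := c₁ * (min (2 ^ γ) 1 / 4)) (by positivity)
    (fun t ht => by positivity) (fun t ht => ⟨by linarith, by linarith, by linarith⟩)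
    (fun t ht s hs z hz hz1 =>
      le_apply_rpow_neg_smul hGc hθ (by linarith [hs.2]) hz hz1)
    fun t ht => by
      calc c₁ * (min (2 ^ γ) 1 / 4) * t ^ (-sigmaStar N α β + 1 - γ)
          = c₁ * (min (2 ^ γ) 1 / 4 * t ^ (-sigmaStar N α β + 1 - γ)) := mul_assoc _ _ _
        _ ≤ _ := mul_le_mul_of_nonneg_left
          (min_mul_rpow_le_integral_half_sub_one hσ (by linarith)) hc₁.le

theorem isLowerRate_rpow_neg_sigmaStar_mul_log_of_le_one (hα : 0 < α) (hθ : 0 ≤ thetaV α β)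
    (hσ : 0 ≤ sigmaStar N α β) (hG : IsAdmissibleProfile G) (hc₁ : 0 < c₁)
    (hGc : ∀ ξ, ξ ≠ 0 → ‖ξ‖ ≤ 1 → c₁ ≤ G ξ) (hW : MeasurableSet W) {γ : ℝ} (hγ : γ ≤ 1) :
    IsLowerRate (mildSol N α β G (decayForcing W γ)) W
      (fun t => t ^ (-sigmaStar N α β) * log t) :=
  isLowerRate_of_le_mul_integral hα hG hW γ (a := fun _ => 0) (b := fun t => t / 2)
    (k := c₁ / 2) (by positivity)
    (fun t ht => mul_nonneg (by positivity) (Real.log_nonneg (by linarith)))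
    (fun t ht => ⟨le_rfl, by linarith, by linarith⟩)
    (fun t ht s hs z hz hz1 =>
      le_apply_rpow_neg_smul hGc hθ (by linarith [hs.2]) hz hz1)
    fun t ht => by
      calc c₁ / 2 * (t ^ (-sigmaStar N α β) * log t)
          = c₁ * (t ^ (-sigmaStar N α β) * (log t / 2)) := by ring
        _ ≤ _ := mul_le_mul_of_nonneg_left
          (rpow_mul_log_le_integral_zero_half hσ hγ (by linarith)) hc₁.le

theorem isLowerRate_rpow_neg_mul_log_of_sigmaStar_le_one (hα : 0 < α) (hθ : 0 ≤ thetaV α β)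
    (hσ : sigmaStar N α β ≤ 1) (hG : IsAdmissibleProfile G) (hc₁ : 0 < c₁)
    (hGc : ∀ ξ, ξ ≠ 0 → ‖ξ‖ ≤ 1 → c₁ ≤ G ξ) (hW : MeasurableSet W) (γ : ℝ) :
    IsLowerRate (mildSol N α β G (decayForcing W γ)) W (fun t => t ^ (-γ) * log t) :=
  isLowerRate_of_le_mul_integral hα hG hW γ (a := fun t => t / 2) (b := fun t => t - 1)
    (k := c₁ * (min (2 ^ γ) 1 / 2)) (by positivity)
    (fun t ht => mul_nonneg (by positivity) (Real.log_nonneg (by linarith)))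
    (fun t ht => ⟨by linarith, by linarith, by linarith⟩)
    (fun t ht s hs z hz hz1 =>
      le_apply_rpow_neg_smul hGc hθ (by linarith [hs.2]) hz hz1)
    fun t ht => by
      calc c₁ * (min (2 ^ γ) 1 / 2) * (t ^ (-γ) * log t)
          = c₁ * (min (2 ^ γ) 1 * t ^ (-γ) * (log t / 2)) := by ring
        _ ≤ _ := mul_le_mul_of_nonneg_left
          (min_mul_rpow_mul_log_le_integral_half_sub_one hσ (by linarith)) hc₁.le

theorem isLowerRate_rpow_neg_sigmaStar_mul_log_of_log_le (hα : 0 < α) (hθ : 0 < thetaV α β)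
    (hσ : 0 ≤ sigmaStar N α β) (hG : IsAdmissibleProfile G) (hc₁ : 0 < c₁)
    (hGc : ∀ ξ, ξ ≠ 0 → ‖ξ‖ ≤ 1 → c₁ * (1 + |log ‖ξ‖|) ≤ G ξ) (hW : MeasurableSet W) (γ : ℝ) :
    IsLowerRate (mildSol N α β G (decayForcing W γ)) W
      (fun t => t ^ (-sigmaStar N α β) * log t) :=
  isLowerRate_of_le_mul_integral hα hG hW γ (a := fun _ => 1) (b := fun _ => 2)
    (m := fun t => c₁ * (thetaV α β * log (t / 2)))
    (k := c₁ * thetaV α β * min (2 ^ (-γ)) (3 ^ (-γ)) / 2) (by positivity)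
    (fun t ht => mul_nonneg (by positivity) (Real.log_nonneg (by linarith)))
    (fun t ht => ⟨zero_le_one, one_le_two, by linarith⟩)
    (fun t ht s hs z hz hz1 => le_trans (by gcongr; linarith [hs.2])
      (mul_log_le_apply_rpow_neg_smul hc₁.le hGc hθ.le (by linarith [hs.2]) hz hz1))
    fun t ht => by
      have hlog := log_div_two_le_log_half (by linarith : (4 : ℝ) ≤ t)
      have hJ := min_mul_rpow_le_integral_one_two (γ := γ) hσ (by linarith : (3 : ℝ) ≤ t)
      calc c₁ * thetaV α β * min (2 ^ (-γ)) (3 ^ (-γ)) / 2 * (t ^ (-sigmaStar N α β) * log t)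
          = c₁ * (thetaV α β * (log t / 2))
              * (min (2 ^ (-γ)) (3 ^ (-γ)) * t ^ (-sigmaStar N α β)) := by ring
        _ ≤ _ := mul_le_mul (by gcongr) hJ (by positivity)
          (mul_nonneg hc₁.le (mul_nonneg hθ.le (Real.log_nonneg (by linarith))))

end LowerRates

theorem le_mul_one_add_abs {a : ℝ} (ha : 0 ≤ a) (x : ℝ) : a ≤ a * (1 + |x|) :=
  le_mul_of_one_le_right ha (by linarith [abs_nonneg x])

theorem IsAdmissibleProfile.of_bounds {N : ℕ} [NeZero N] {G : Euc N → ℝ} {C ρ : ℝ}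
    (hρ : (N : ℝ) < ρ) (hcont : ContinuousOn G {0}ᶜ) (hpos : ∀ ξ, ξ ≠ 0 → 0 < G ξ)
    (hin : ∀ ξ, ξ ≠ 0 → ‖ξ‖ ≤ 1 → G ξ ≤ C * (1 + |log ‖ξ‖|))
    (hout : ∀ ξ, 1 ≤ ‖ξ‖ → G ξ ≤ C * ‖ξ‖ ^ (-ρ)) : IsAdmissibleProfile G where
  measurable := measurable_of_continuousOn_compl_singleton 0 hcont
  integrable := by
    refine integrable_of_norm_le_log_of_norm_le_rpow (C := C)
      (by rwa [finrank_euclideanSpace_fin])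
      (measurable_of_continuousOn_compl_singleton 0 hcont).aestronglyMeasurable
      (fun ξ hξ h1 => ?_) (fun ξ h1 => ?_)
    · rw [Real.norm_of_nonneg (hpos ξ hξ).le]; exact hin ξ hξ h1
    · rw [Real.norm_of_nonneg (hpos ξ (norm_pos_iff.1 (by linarith))).le]; exact hout ξ h1
  nonneg ξ hξ := (hpos ξ hξ).le

theorem compact_lower_optimal_general
    (N : ℕ) (hN : 1 ≤ N) (α β : ℝ) (hα0 : 0 < α) (hα1 : α < 1)
    (hβ0 : 0 < β) (hNβ : (N : ℝ) ≤ 4 * β)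
    (G : Euc N → ℝ) (C₁ : ℝ) (hC₁ : 0 < C₁)
    (hGcont : ContinuousOn G {(0 : Euc N)}ᶜ)
    (hGpos : ∀ ξ : Euc N, ξ ≠ 0 → 0 < G ξ)
    (hGin₁ : (N : ℝ) < 4 * β → ∀ ξ : Euc N, ξ ≠ 0 → ‖ξ‖ ≤ 1 → G ξ ≤ C₁)
    (hGin₂ : (N : ℝ) = 4 * β → ∀ ξ : Euc N, ξ ≠ 0 → ‖ξ‖ ≤ 1 →
      G ξ ≤ C₁ * (1 + |Real.log ‖ξ‖|))
    (hGout : ∀ ξ : Euc N, 1 ≤ ‖ξ‖ → G ξ ≤ C₁ * ‖ξ‖ ^ (-((N : ℝ) + 2 * β)))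
    (c₁ : ℝ) (hc₁ : 0 < c₁)
    (hGlow₁ : (N : ℝ) < 4 * β → ∀ ξ : Euc N, ξ ≠ 0 → ‖ξ‖ ≤ 1 → c₁ ≤ G ξ)
    (hGlow₂ : (N : ℝ) = 4 * β → ∀ ξ : Euc N, ξ ≠ 0 → ‖ξ‖ ≤ 1 →
      c₁ * (1 + |Real.log ‖ξ‖|) ≤ G ξ)
    (γ : ℝ) :
    ∀ K : Set (Euc N), IsCompact K → ∃ c T : ℝ, 0 < c ∧ 2 ≤ T ∧
      ∀ t : ℝ, T ≤ t → ∀ x ∈ K,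
      ((N : ℝ) < 2 * β →
        (γ < 1 → c * t ^ (-sigmaStar N α β + 1 - γ) ≤ mildSol N α β G (fun (y : Euc N) (s : ℝ) => Set.indicator (K + Metric.ball (0 : Euc N) 1) (fun _ => (1 + s) ^ (-γ)) y) x t) ∧
        (γ = 1 → c * t ^ (-sigmaStar N α β) * Real.log t ≤ mildSol N α β G (fun (y : Euc N) (s : ℝ) => Set.indicator (K + Metric.ball (0 : Euc N) 1) (fun _ => (1 + s) ^ (-γ)) y) x t) ∧
        (1 < γ → c * t ^ (-sigmaStar N α β) ≤ mildSol N α β G (fun (y : Euc N) (s : ℝ) => Set.indicator (K + Metric.ball (0 : Euc N) 1) (fun _ => (1 + s) ^ (-γ)) y) x t)) ∧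
      ((N : ℝ) = 2 * β →
        (γ ≤ 1 → c * t ^ (-γ) * Real.log t ≤ mildSol N α β G (fun (y : Euc N) (s : ℝ) => Set.indicator (K + Metric.ball (0 : Euc N) 1) (fun _ => (1 + s) ^ (-γ)) y) x t) ∧
        (1 < γ → c * t ^ (-1 : ℝ) ≤ mildSol N α β G (fun (y : Euc N) (s : ℝ) => Set.indicator (K + Metric.ball (0 : Euc N) 1) (fun _ => (1 + s) ^ (-γ)) y) x t)) ∧
      (2 * β < (N : ℝ) ∧ (N : ℝ) < 4 * β →
        (γ < sigmaStar N α β → c * t ^ (-γ) ≤ mildSol N α β G (fun (y : Euc N) (s : ℝ) => Set.indicator (K + Metric.ball (0 : Euc N) 1) (fun _ => (1 + s) ^ (-γ)) y) x t) ∧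
        (sigmaStar N α β ≤ γ → c * t ^ (-sigmaStar N α β) ≤ mildSol N α β G (fun (y : Euc N) (s : ℝ) => Set.indicator (K + Metric.ball (0 : Euc N) 1) (fun _ => (1 + s) ^ (-γ)) y) x t)) ∧
      ((N : ℝ) = 4 * β →
        (γ < 1 + α → c * t ^ (-γ) ≤ mildSol N α β G (fun (y : Euc N) (s : ℝ) => Set.indicator (K + Metric.ball (0 : Euc N) 1) (fun _ => (1 + s) ^ (-γ)) y) x t) ∧
        (1 + α ≤ γ → c * t ^ (-(1 + α)) * Real.log t ≤ mildSol N α β G (fun (y : Euc N) (s : ℝ) => Set.indicator (K + Metric.ball (0 : Euc N) 1) (fun _ => (1 + s) ^ (-γ)) y) x t)) := by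
  intro K _
  have : NeZero N := ⟨by omega⟩
  have hθ := thetaV_pos hα0 hβ0
  have hσ := sigmaStar_pos (N := N) hα1 hθ.le
  have hG : IsAdmissibleProfile G := .of_bounds (by linarith) hGcont hGpos
    (fun ξ hξ h1 => hNβ.lt_or_eq.elim
      (fun h => (hGin₁ h ξ hξ h1).trans (le_mul_one_add_abs hC₁.le _)) (fun h => hGin₂ h ξ hξ h1))
    hGout
  have hGc : ∀ ξ, ξ ≠ 0 → ‖ξ‖ ≤ 1 → c₁ ≤ G ξ := fun ξ hξ h1 => hNβ.lt_or_eq.elim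
    (fun h => hGlow₁ h ξ hξ h1) (fun h => (le_mul_one_add_abs hc₁.le _).trans (hGlow₂ h ξ hξ h1))
  have hW : MeasurableSet (K + Metric.ball (0 : Euc N) 1) :=
    Metric.isOpen_ball.add_left.measurableSet
  obtain ⟨c, ⟨hE, hL, hM, hγlog, hσlog, h4log⟩, hc⟩ :=
    ((isLowerRate_rpow_neg_sigmaStar hα0 hθ.le hσ.le hG hc₁ hGc hW γ).and <|
      (isLowerRate_rpow_neg hα0 hθ.le hσ.le hG hc₁ hGc hW γ).and <|
      (isLowerRate_rpow hα0 hθ.le hσ.le hG hc₁ hGc hW γ).and <|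
      (eventually_imp_distrib_left.2 fun hγ =>
        isLowerRate_rpow_neg_sigmaStar_mul_log_of_le_one hα0 hθ.le hσ.le hG hc₁ hGc hW hγ).and <|
      (eventually_imp_distrib_left.2 fun hσ1 =>
        isLowerRate_rpow_neg_mul_log_of_sigmaStar_le_one hα0 hθ.le hσ1 hG hc₁ hGc hW γ).and <|
      eventually_imp_distrib_left.2 fun h4 =>
        isLowerRate_rpow_neg_sigmaStar_mul_log_of_log_le hα0 hθ hσ.le hG hc₁ (hGlow₂ h4) hW γ
    ).and self_mem_nhdsWithin |>.exists
  refine ⟨c, 16, hc, by norm_num, fun t ht x hx => ?_⟩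
  have hxW : Metric.ball x 1 ⊆ K + Metric.ball 0 1 := by
    have := add_subset_add_right (t := Metric.ball (0 : Euc N) 1) (singleton_subset_iff.2 hx)
    rwa [singleton_add_ball, add_zero] at this
  refine ⟨fun _ => ⟨fun _ => hM t ht x hxW, fun hγ => ?_, fun _ => hE t ht x hxW⟩,
    fun h2 => ⟨fun _ => ?_, fun _ => ?_⟩, fun _ => ⟨fun _ => hL t ht x hxW, fun _ => hE t ht x hxW⟩,
    fun h4 => ⟨fun _ => hL t ht x hxW, fun _ => ?_⟩⟩
  · exact (mul_assoc _ _ _).trans_le (hγlog hγ.le t ht x hxW)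
  · exact (mul_assoc _ _ _).trans_le (hσlog (sigmaStar_eq_one hβ0 h2).le t ht x hxW)
  · have := hE t ht x hxW
    rwa [sigmaStar_eq_one hβ0 h2] at this
  · have := h4log h4 t ht x hxW
    rw [sigmaStar_eq_one_add hβ0 h4] at this
    exact (mul_assoc _ _ _).trans_le this

theorem compact_lower_optimal
    (N : ℕ) (hN : 1 ≤ N) (α β : ℝ) (hα0 : 0 < α) (hα1 : α < 1)
    (hβ0 : 0 < β) (hβ1 : β ≤ 1) (hNβ : (N : ℝ) ≤ 4 * β)
    (G : Euc N → ℝ) (C₁ : ℝ) (hC₁ : 0 < C₁)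
    (hGcont : ContinuousOn G {(0 : Euc N)}ᶜ)
    (hGpos : ∀ ξ : Euc N, ξ ≠ 0 → 0 < G ξ)
    (hGin₁ : (N : ℝ) < 4 * β → ∀ ξ : Euc N, ξ ≠ 0 → ‖ξ‖ ≤ 1 → G ξ ≤ C₁)
    (hGin₂ : (N : ℝ) = 4 * β → ∀ ξ : Euc N, ξ ≠ 0 → ‖ξ‖ ≤ 1 →
      G ξ ≤ C₁ * (1 + |Real.log ‖ξ‖|))
    (hGout : ∀ ξ : Euc N, 1 ≤ ‖ξ‖ → G ξ ≤ C₁ * ‖ξ‖ ^ (-((N : ℝ) + 2 * β)))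
    (c₁ : ℝ) (hc₁ : 0 < c₁)
    (hGlow₁ : (N : ℝ) < 4 * β → ∀ ξ : Euc N, ξ ≠ 0 → ‖ξ‖ ≤ 1 → c₁ ≤ G ξ)
    (hGlow₂ : (N : ℝ) = 4 * β → ∀ ξ : Euc N, ξ ≠ 0 → ‖ξ‖ ≤ 1 →
      c₁ * (1 + |Real.log ‖ξ‖|) ≤ G ξ)
    (γ : ℝ) :
    ∀ K : Set (Euc N), IsCompact K → ∃ c T : ℝ, 0 < c ∧ 2 ≤ T ∧
      ∀ t : ℝ, T ≤ t → ∀ x ∈ K,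
      ((N : ℝ) < 2 * β →
        (γ < 1 → c * t ^ (-sigmaStar N α β + 1 - γ) ≤ mildSol N α β G (fun (y : Euc N) (s : ℝ) => Set.indicator (K + Metric.ball (0 : Euc N) 1) (fun _ => (1 + s) ^ (-γ)) y) x t) ∧
        (γ = 1 → c * t ^ (-sigmaStar N α β) * Real.log t ≤ mildSol N α β G (fun (y : Euc N) (s : ℝ) => Set.indicator (K + Metric.ball (0 : Euc N) 1) (fun _ => (1 + s) ^ (-γ)) y) x t) ∧
        (1 < γ → c * t ^ (-sigmaStar N α β) ≤ mildSol N α β G (fun (y : Euc N) (s : ℝ) => Set.indicator (K + Metric.ball (0 : Euc N) 1) (fun _ => (1 + s) ^ (-γ)) y) x t)) ∧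
      ((N : ℝ) = 2 * β →
        (γ ≤ 1 → c * t ^ (-γ) * Real.log t ≤ mildSol N α β G (fun (y : Euc N) (s : ℝ) => Set.indicator (K + Metric.ball (0 : Euc N) 1) (fun _ => (1 + s) ^ (-γ)) y) x t) ∧
        (1 < γ → c * t ^ (-1 : ℝ) ≤ mildSol N α β G (fun (y : Euc N) (s : ℝ) => Set.indicator (K + Metric.ball (0 : Euc N) 1) (fun _ => (1 + s) ^ (-γ)) y) x t)) ∧
      (2 * β < (N : ℝ) ∧ (N : ℝ) < 4 * β →
        (γ < sigmaStar N α β → c * t ^ (-γ) ≤ mildSol N α β G (fun (y : Euc N) (s : ℝ) => Set.indicator (K + Metric.ball (0 : Euc N) 1) (fun _ => (1 + s) ^ (-γ)) y) x t) ∧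
        (sigmaStar N α β ≤ γ → c * t ^ (-sigmaStar N α β) ≤ mildSol N α β G (fun (y : Euc N) (s : ℝ) => Set.indicator (K + Metric.ball (0 : Euc N) 1) (fun _ => (1 + s) ^ (-γ)) y) x t)) ∧
      ((N : ℝ) = 4 * β →
        (γ < 1 + α → c * t ^ (-γ) ≤ mildSol N α β G (fun (y : Euc N) (s : ℝ) => Set.indicator (K + Metric.ball (0 : Euc N) 1) (fun _ => (1 + s) ^ (-γ)) y) x t) ∧
        (1 + α ≤ γ → c * t ^ (-(1 + α)) * Real.log t ≤ mildSol N α β G (fun (y : Euc N) (s : ℝ) => Set.indicator (K + Metric.ball (0 : Euc N) 1) (fun _ => (1 + s) ^ (-γ)) y) x t)) :=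
  compact_lower_optimal_general N hN α β hα0 hα1 hβ0 hNβ G C₁ hC₁ hGcont hGpos hGin₁ hGin₂ hGout c₁
    hc₁ hGlow₁ hGlow₂ γ
end
end

section
/- Suppose N < 2β. Let γ ∈ ℝ, let p ∈ [1,∞], let f be measurable with ∫_{ℝ^N} |f(y,t)| dy ≤ C₀ (1+t)^{-γ} for all t > 0, and let g : (0,∞) → (0,∞) be measurable with g(t) → ∞ and g(t)/t^θ → 0 as t → ∞. Then for all 0 < ν < μ < ∞ there exist C > 0 and T ≥ 2 such that for all t ≥ T the mild solution u satisfies: ‖u(·,t)‖_{L^p({x : ν g(t) < |x| < μ g(t)})} ≤ C g(t)^{N/p} R(t), where R(t) = t^{-σ*+1-γ} if γ < 1, R(t) = t^{-σ*} log t if γ = 1, and R(t) = t^{-σ*} if γ > 1 (with g(t)^{N/p} := 1 when p = ∞). -/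
/-!
For `N < 2β` the exponent `σ* = 1 - α + Nθ` lies in `(0, 1)` and the profile `G` is bounded,
so `|Y(x, τ)| ≤ C₁ τ^(-σ*)` and, uniformly in `x`,
`|u(x, t)| ≤ C₁ C₀ ∫₀ᵗ (t - s)^(-σ*) (1 + s)^(-γ) ds`.
Splitting this time integral at `t / 2` bounds it by a multiple of `R(t)`: near `s = t` the
weight `(1 + s)^(-γ)` is comparable to `t^(-γ)`, and on `(0, t / 2)` the kernel factor is at most
`(t / 2)^(-σ*)` while `∫₀^{t/2} (1 + s)^(-γ) ds` grows like `t^(1-γ)`, `log t` or `1`.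
The annulus lies in the ball of radius `μ g(t)`, whose measure is a multiple of `g(t)^N`;
this gives the factor `g(t)^(N/p)`.
-/

open MeasureTheory Real Set Pointwise
open scoped ENNReal

noncomputable section

lemma sigmaStar_pos_s8 {N : ℕ} {α β : ℝ} (hα0 : 0 < α) (hα1 : α < 1) (hβ0 : 0 < β) :
    0 < sigmaStar N α β := by
  have : 0 ≤ (N : ℝ) * thetaV α β := by unfold thetaV; positivity
  unfold sigmaStar; linarith

lemma sigmaStar_lt_one {N : ℕ} {α β : ℝ} (hα0 : 0 < α) (hβ0 : 0 < β) (h2β : (N : ℝ) < 2 * β) :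
    sigmaStar N α β < 1 := by
  have : (N : ℝ) * thetaV α β < α := by
    rw [thetaV, mul_div_assoc', div_lt_iff₀ (by positivity)]
    nlinarith
  unfold sigmaStar; linarith

lemma rpow_neg_le_two_rpow_abs_mul {x t : ℝ} (γ : ℝ) (ht : 0 < t) (hx₁ : t / 2 ≤ x)
    (hx₂ : x ≤ 2 * t) : x ^ (-γ) ≤ 2 ^ |γ| * t ^ (-γ) := by
  rcases le_or_gt 0 γ with hγ | hγ
  · calc x ^ (-γ) ≤ (t / 2) ^ (-γ) := rpow_le_rpow_of_nonpos (by positivity) hx₁ (by linarith)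
      _ = 2 ^ |γ| * t ^ (-γ) := by
        rw [div_rpow ht.le zero_le_two, rpow_neg zero_le_two, abs_of_nonneg hγ]
        field_simp
  · calc x ^ (-γ) ≤ (2 * t) ^ (-γ) := rpow_le_rpow (by linarith) hx₂ (by linarith)
      _ = 2 ^ |γ| * t ^ (-γ) := by rw [mul_rpow zero_le_two ht.le, abs_of_neg hγ]

/-- The factor by which the paper's rate `R(t)` exceeds `t ^ (-σ*)`. -/
def timeGrowth (γ t : ℝ) : ℝ :=
  if γ < 1 then t ^ (1 - γ) else if γ = 1 then Real.log t else 1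

lemma rpow_one_sub_le_timeGrowth (γ : ℝ) {t : ℝ} (ht : 3 ≤ t) :
    t ^ (1 - γ) ≤ timeGrowth γ t := by
  unfold timeGrowth
  split_ifs with hlt heq
  · exact le_rfl
  · rw [heq, sub_self, rpow_zero, le_log_iff_exp_le (by linarith)]
    linarith [exp_one_lt_d9]
  · have : 1 < γ := lt_of_le_of_ne (not_lt.1 hlt) (Ne.symm heq)
    exact rpow_le_one_of_one_le_of_nonpos (by linarith) (by linarith)

lemma integral_one_add_rpow_neg_le (γ : ℝ) :
    ∃ B > 0, ∀ a t : ℝ, 0 ≤ a → 1 + a ≤ t →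
      ∫ s in (0 : ℝ)..a, (1 + s) ^ (-γ) ≤ B * timeGrowth γ t := by
  have hshift : ∀ a, ∫ s in (0 : ℝ)..a, (1 + s) ^ (-γ) = ∫ x in (1 : ℝ)..1 + a, x ^ (-γ) := by
    intro a
    simpa using intervalIntegral.integral_comp_add_left (a := 0) (b := a) (fun x : ℝ => x ^ (-γ)) 1
  have hzero : ∀ a : ℝ, 0 ≤ a → (0 : ℝ) ∉ uIcc 1 (1 + a) := fun a ha h => by
    rw [uIcc_of_le (by linarith)] at h; linarith [h.1]
  rcases lt_trichotomy γ 1 with hγ | rfl | hγ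
  · refine ⟨1 / (1 - γ), by simp [hγ], fun a t ha hat => ?_⟩
    rw [hshift, integral_rpow (Or.inl (by linarith)), one_rpow, timeGrowth, if_pos hγ,
      show -γ + 1 = 1 - γ by ring, div_mul_eq_mul_div, one_mul]
    gcongr
    linarith [rpow_le_rpow (by linarith) hat (by linarith : 0 ≤ 1 - γ)]
  · refine ⟨1, one_pos, fun a t ha hat => ?_⟩
    have hinv : ∫ x in (1 : ℝ)..1 + a, x ^ (-(1 : ℝ)) = ∫ x in (1 : ℝ)..1 + a, x⁻¹ :=
      intervalIntegral.integral_congr fun x _ => rpow_neg_one x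
    rw [hshift, hinv, integral_inv (hzero a ha), div_one, timeGrowth, if_neg (lt_irrefl 1),
      if_pos rfl, one_mul]
    exact log_le_log (by linarith) hat
  · refine ⟨1 / (γ - 1), by simp [hγ], fun a t ha hat => ?_⟩
    rw [hshift, integral_rpow (Or.inr ⟨by intro h; linarith, hzero a ha⟩), one_rpow, timeGrowth,
      if_neg (by linarith), if_neg hγ.ne', mul_one,
      show -γ + 1 = -(γ - 1) by ring, div_neg, ← neg_div, neg_sub]
    gcongr
    linarith [rpow_nonneg (by linarith : (0 : ℝ) ≤ 1 + a) (-(γ - 1))]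

lemma intervalIntegrable_sub_rpow {r : ℝ} (hr : -1 < r) (t a b : ℝ) :
    IntervalIntegrable (fun s => (t - s) ^ r) volume a b := by
  simpa using
    (intervalIntegral.intervalIntegrable_rpow' hr (a := t - a) (b := t - b)).comp_sub_left t

lemma continuousOn_one_add_rpow (γ : ℝ) : ContinuousOn (fun s : ℝ => (1 + s) ^ γ) (Ici 0) :=
  (continuousOn_const.add continuousOn_id).rpow_const fun s hs =>
    Or.inl (ne_of_gt (by simp only [Pi.add_apply, id_eq]; linarith [mem_Ici.1 hs]))

lemma intervalIntegrable_sub_rpow_mul_one_add_rpow {r : ℝ} (hr : -1 < r) (γ t : ℝ) {a b : ℝ}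
    (ha : 0 ≤ a) (hb : 0 ≤ b) :
    IntervalIntegrable (fun s => (t - s) ^ r * (1 + s) ^ γ) volume a b :=
  (intervalIntegrable_sub_rpow hr t a b).mul_continuousOn
    ((continuousOn_one_add_rpow γ).mono fun _ hs => le_trans (le_min ha hb) hs.1)

lemma integral_sub_rpow_neg_mul_one_add_rpow_neg_le {σ : ℝ} (hσ0 : 0 < σ) (hσ1 : σ < 1)
    (γ : ℝ) : ∃ A > 0, ∀ t : ℝ, 3 ≤ t →
      ∫ s in Ioo (0 : ℝ) t, (t - s) ^ (-σ) * (1 + s) ^ (-γ) ≤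
        A * (t ^ (-σ) * timeGrowth γ t) := by
  obtain ⟨B, hB, hBint⟩ := integral_one_add_rpow_neg_le γ
  refine ⟨2 ^ σ * B + 2 ^ |γ| * 2 ^ (σ - 1) / (1 - σ),
    add_pos (by positivity) (div_pos (by positivity) (by linarith)), fun t ht => ?_⟩
  have ht0 : 0 < t := by linarith
  have hI {a b : ℝ} (ha : 0 ≤ a) (hb : 0 ≤ b) :=
    intervalIntegrable_sub_rpow_mul_one_add_rpow (r := -σ) (by linarith) (-γ) t ha hb
  have hhalf : ∫ s in (0 : ℝ)..t / 2, (t - s) ^ (-σ) * (1 + s) ^ (-γ) ≤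
      2 ^ σ * B * (t ^ (-σ) * timeGrowth γ t) :=
    calc ∫ s in (0 : ℝ)..t / 2, (t - s) ^ (-σ) * (1 + s) ^ (-γ)
        ≤ ∫ s in (0 : ℝ)..t / 2, (t / 2) ^ (-σ) * (1 + s) ^ (-γ) := by
          refine intervalIntegral.integral_mono_on (by positivity) (hI le_rfl (by positivity))
            (((continuousOn_one_add_rpow (-γ)).mono fun _ hs => hs.1).intervalIntegrable_of_Icc
              (by positivity) |>.const_mul _) fun s hs => ?_
          gcongr ?_ * _
          · exact rpow_nonneg (by linarith [hs.1]) _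
          · exact rpow_le_rpow_of_nonpos (by positivity) (by linarith [hs.2]) (by linarith)
      _ ≤ (t / 2) ^ (-σ) * (B * timeGrowth γ t) := by
          rw [intervalIntegral.integral_const_mul]
          gcongr
          exact hBint _ _ (by positivity) (by linarith)
      _ = 2 ^ σ * B * (t ^ (-σ) * timeGrowth γ t) := by
          rw [div_rpow ht0.le zero_le_two, rpow_neg zero_le_two]
          field_simp
  have hrest : ∫ s in t / 2..t, (t - s) ^ (-σ) * (1 + s) ^ (-γ) ≤
      2 ^ |γ| * 2 ^ (σ - 1) / (1 - σ) * (t ^ (-σ) * timeGrowth γ t) :=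
    calc ∫ s in t / 2..t, (t - s) ^ (-σ) * (1 + s) ^ (-γ)
        ≤ ∫ s in t / 2..t, 2 ^ |γ| * t ^ (-γ) * (t - s) ^ (-σ) := by
          refine intervalIntegral.integral_mono_on (by linarith) (hI (by positivity) ht0.le)
            ((intervalIntegrable_sub_rpow (by linarith) t _ _).const_mul _) fun s hs => ?_
          rw [mul_comm]
          gcongr
          · exact rpow_nonneg (by linarith [hs.2]) _
          · exact rpow_neg_le_two_rpow_abs_mul γ ht0 (by linarith [hs.1]) (by linarith [hs.2])
      _ = 2 ^ |γ| * t ^ (-γ) * ((t / 2) ^ (1 - σ) / (1 - σ)) := by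
          rw [intervalIntegral.integral_const_mul, intervalIntegral.integral_comp_sub_left
            (fun x => x ^ (-σ)), integral_rpow (Or.inl (by linarith)), sub_self, sub_half,
            zero_rpow (by linarith), sub_zero, show -σ + 1 = 1 - σ by ring]
      _ = 2 ^ |γ| * 2 ^ (σ - 1) / (1 - σ) * (t ^ (-σ) * t ^ (1 - γ)) := by
          rw [div_rpow ht0.le zero_le_two, show σ - 1 = -(1 - σ) by ring, rpow_neg zero_le_two,
            ← rpow_add ht0, show -σ + (1 - γ) = -γ + (1 - σ) by ring, rpow_add ht0]
          ring
      _ ≤ 2 ^ |γ| * 2 ^ (σ - 1) / (1 - σ) * (t ^ (-σ) * timeGrowth γ t) := by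
          have : 0 ≤ 1 - σ := by linarith
          gcongr
          exact rpow_one_sub_le_timeGrowth γ ht
  rw [← integral_Ioc_eq_integral_Ioo, ← intervalIntegral.integral_of_le ht0.le,
    ← intervalIntegral.integral_add_adjacent_intervals (b := t / 2) (hI le_rfl (by positivity))
      (hI (by positivity) ht0.le)]
  linarith

section LintegralBound

variable {X : Type*} [MeasurableSpace X] {μ : Measure X} {φ : X → ℝ} {c : ℝ}

lemma integrable_of_lintegral_ofReal_abs_le (hφ : AEStronglyMeasurable φ μ)
    (h : ∫⁻ x, ENNReal.ofReal |φ x| ∂μ ≤ ENNReal.ofReal c) : Integrable φ μ :=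
  ⟨hφ, (hasFiniteIntegral_iff_norm φ).2 (h.trans_lt ENNReal.ofReal_lt_top)⟩

lemma integral_abs_le_of_lintegral_ofReal_abs_le (hφ : AEStronglyMeasurable φ μ) (hc : 0 ≤ c)
    (h : ∫⁻ x, ENNReal.ofReal |φ x| ∂μ ≤ ENNReal.ofReal c) : ∫ x, |φ x| ∂μ ≤ c := by
  rw [integral_eq_lintegral_of_nonneg_ae (.of_forall fun _ => abs_nonneg _) hφ.norm]
  exact ENNReal.toReal_le_of_le_ofReal hc h

end LintegralBound

lemma nonneg_of_forall_ne_zero_abs_le {E : Type*} [Zero E] [Nontrivial E] {G : E → ℝ} {C : ℝ}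
    (hG : ∀ ξ, ξ ≠ 0 → |G ξ| ≤ C) : 0 ≤ C :=
  (abs_nonneg _).trans (hG _ (exists_ne (0 : E)).choose_spec)

lemma abs_le_of_le_inside_of_le_rpow_outside {E : Type*} [NormedAddCommGroup E] {G : E → ℝ}
    {C a : ℝ} (hC : 0 ≤ C) (ha : 0 ≤ a) (hGpos : ∀ ξ, ξ ≠ 0 → 0 < G ξ)
    (hGin : ∀ ξ, ξ ≠ 0 → ‖ξ‖ ≤ 1 → G ξ ≤ C) (hGout : ∀ ξ, 1 ≤ ‖ξ‖ → G ξ ≤ C * ‖ξ‖ ^ (-a))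
    (ξ : E) (hξ : ξ ≠ 0) : |G ξ| ≤ C := by
  rw [abs_of_pos (hGpos ξ hξ)]
  rcases le_or_gt ‖ξ‖ 1 with h | h
  · exact hGin ξ hξ h
  · exact (hGout ξ h.le).trans <| mul_le_of_le_one_right hC <|
      rpow_le_one_of_one_le_of_nonpos h.le (neg_nonpos.2 ha)

section Kernel

variable {N : ℕ} {α β C₁ : ℝ} {G : Euc N → ℝ}

lemma abs_kernelY_le (hG : ∀ ξ, ξ ≠ 0 → |G ξ| ≤ C₁) {x : Euc N} (hx : x ≠ 0) {τ : ℝ}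
    (hτ : 0 < τ) : |kernelY N α β G x τ| ≤ C₁ * τ ^ (-sigmaStar N α β) := by
  rw [kernelY, abs_mul, abs_of_pos (rpow_pos_of_pos hτ _), mul_comm]
  gcongr
  exact hG _ (smul_ne_zero (rpow_pos_of_pos hτ _).ne' hx)

variable [NeZero N]

lemma abs_integral_kernelY_mul_le (hG : ∀ ξ, ξ ≠ 0 → |G ξ| ≤ C₁) {φ : Euc N → ℝ}
    (hφ : Integrable φ) (x : Euc N) {τ : ℝ} (hτ : 0 < τ) :
    |∫ y, kernelY N α β G (x - y) τ * φ y| ≤ C₁ * τ ^ (-sigmaStar N α β) * ∫ y, |φ y| := by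
  rw [← integral_const_mul, ← Real.norm_eq_abs]
  refine norm_integral_le_of_norm_le (hφ.abs.const_mul _) ?_
  filter_upwards [Measure.ae_ne volume x] with y hy
  rw [Real.norm_eq_abs, abs_mul]
  have hC₁ : 0 ≤ C₁ := nonneg_of_forall_ne_zero_abs_le hG
  gcongr
  exact abs_kernelY_le hG (sub_ne_zero.2 hy.symm) hτ

lemma abs_mildSol_le (hG : ∀ ξ, ξ ≠ 0 → |G ξ| ≤ C₁) {f : Euc N → ℝ → ℝ}
    (hfm : Measurable (Function.uncurry f)) {γ C₀ : ℝ} (hC₀ : 0 ≤ C₀)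
    (hf1 : ∀ t : ℝ, 0 < t →
      (∫⁻ y, ENNReal.ofReal |f y t|) ≤ ENNReal.ofReal (C₀ * (1 + t) ^ (-γ)))
    (hσ1 : sigmaStar N α β < 1) (x : Euc N) {t : ℝ} (ht : 0 < t) :
    |mildSol N α β G f x t| ≤
      C₁ * C₀ * ∫ s in Ioo (0 : ℝ) t, (t - s) ^ (-sigmaStar N α β) * (1 + s) ^ (-γ) := by
  have hC₁ : 0 ≤ C₁ := nonneg_of_forall_ne_zero_abs_le hG
  have hbound : IntegrableOn (fun s => (t - s) ^ (-sigmaStar N α β) * (1 + s) ^ (-γ))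
      (Ioo 0 t) := by
    rw [← intervalIntegrable_iff_integrableOn_Ioo_of_le ht.le]
    exact intervalIntegrable_sub_rpow_mul_one_add_rpow (by linarith) (-γ) t le_rfl ht.le
  rw [mildSol, ← integral_const_mul, ← Real.norm_eq_abs]
  refine norm_integral_le_of_norm_le (hbound.const_mul _) <|
    (ae_restrict_iff' measurableSet_Ioo).2 <| .of_forall fun s ⟨hs0, hst⟩ => ?_
  have hfs : AEStronglyMeasurable (fun y => f y s) :=
    (hfm.comp (measurable_id.prodMk measurable_const)).aestronglyMeasurable
  have hdecay : 0 ≤ C₀ * (1 + s) ^ (-γ) := mul_nonneg hC₀ (rpow_nonneg (by linarith) _)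
  calc ‖∫ y, kernelY N α β G (x - y) (t - s) * f y s‖
      ≤ C₁ * (t - s) ^ (-sigmaStar N α β) * ∫ y, |f y s| :=
        abs_integral_kernelY_mul_le hG (integrable_of_lintegral_ofReal_abs_le hfs (hf1 s hs0))
          x (by linarith)
    _ ≤ C₁ * (t - s) ^ (-sigmaStar N α β) * (C₀ * (1 + s) ^ (-γ)) := by
        gcongr
        exact integral_abs_le_of_lintegral_ofReal_abs_le hfs hdecay (hf1 s hs0)
    _ = C₁ * C₀ * ((t - s) ^ (-sigmaStar N α β) * (1 + s) ^ (-γ)) := by ring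

end Kernel

lemma eLpNorm_restrict_le_of_subset_ball {E F : Type*} [NormedAddCommGroup E] [NormedSpace ℝ E]
    [MeasurableSpace E] [BorelSpace E] [FiniteDimensional ℝ E] [Nontrivial E] (μ : Measure E)
    [μ.IsAddHaarMeasure] [NormedAddCommGroup F] {u : E → F} (p : ℝ≥0∞) {S : Set E} {r M : ℝ}
    (hr : 0 ≤ r) (hS : S ⊆ Metric.ball 0 r) (hu : ∀ᵐ x ∂μ.restrict S, ‖u x‖ ≤ M) :
    eLpNorm u p (μ.restrict S) ≤ ENNReal.ofReal (r ^ ((Module.finrank ℝ E : ℝ) / p.toReal) *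
      (μ (Metric.ball 0 1)).toReal ^ p.toReal⁻¹ * M) := by
  have hq : 0 ≤ p.toReal⁻¹ := inv_nonneg.2 ENNReal.toReal_nonneg
  have hunit : μ (Metric.ball 0 1) = ENNReal.ofReal (μ (Metric.ball 0 1)).toReal :=
    (ENNReal.ofReal_toReal measure_ball_lt_top.ne).symm
  calc eLpNorm u p (μ.restrict S) ≤ μ S ^ p.toReal⁻¹ * ENNReal.ofReal M := by
        simpa using eLpNorm_le_of_ae_bound hu
    _ ≤ μ (Metric.ball 0 r) ^ p.toReal⁻¹ * ENNReal.ofReal M := by gcongr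
    _ = _ := by
        rw [Measure.addHaar_ball μ 0 hr, hunit, ENNReal.mul_rpow_of_nonneg _ _ hq,
          ENNReal.ofReal_rpow_of_nonneg (by positivity) hq,
          ENNReal.ofReal_rpow_of_nonneg ENNReal.toReal_nonneg hq, ← ENNReal.ofReal_mul
            (by positivity), ← ENNReal.ofReal_mul (by positivity), ← rpow_natCast,
          ← rpow_mul hr, ← div_eq_mul_inv, ENNReal.toReal_ofReal ENNReal.toReal_nonneg]

theorem intermediate_upper_N_lt_2beta_general
    (N : ℕ) (hN : 1 ≤ N) (α β : ℝ) (hα0 : 0 < α) (hα1 : α < 1)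
    (hβ0 : 0 < β)
    (G : Euc N → ℝ) (C₁ : ℝ) (hC₁ : 0 < C₁)
    (hGpos : ∀ ξ : Euc N, ξ ≠ 0 → 0 < G ξ)
    (hGin₁ : (N : ℝ) < 4 * β → ∀ ξ : Euc N, ξ ≠ 0 → ‖ξ‖ ≤ 1 → G ξ ≤ C₁)
    (hGout : ∀ ξ : Euc N, 1 ≤ ‖ξ‖ → G ξ ≤ C₁ * ‖ξ‖ ^ (-((N : ℝ) + 2 * β)))
    (γ : ℝ) (f : Euc N → ℝ → ℝ) (hfm : Measurable (Function.uncurry f))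
    (C₀ : ℝ) (hC₀ : 0 < C₀)
    (hf1 : ∀ t : ℝ, 0 < t →
      (∫⁻ y, ENNReal.ofReal |f y t|) ≤ ENNReal.ofReal (C₀ * (1 + t) ^ (-γ)))
    (p : ℝ≥0∞)
    (g : ℝ → ℝ) (hgpos : ∀ t : ℝ, 0 < t → 0 < g t)
    (h2β : (N : ℝ) < 2 * β) :
    ∀ ν μ : ℝ, 0 < ν → ν < μ → ∃ C T : ℝ, 0 < C ∧ 2 ≤ T ∧ ∀ t : ℝ, T ≤ t →
      (γ < 1 → eLpNorm (fun x => mildSol N α β G f x t) p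
          (volume.restrict {x : Euc N | ν * g t < ‖x‖ ∧ ‖x‖ < μ * g t}) ≤ ENNReal.ofReal (C * g t ^ ((N : ℝ) / p.toReal) * (t ^ (-sigmaStar N α β + 1 - γ)))) ∧
      (γ = 1 → eLpNorm (fun x => mildSol N α β G f x t) p
          (volume.restrict {x : Euc N | ν * g t < ‖x‖ ∧ ‖x‖ < μ * g t}) ≤ ENNReal.ofReal (C * g t ^ ((N : ℝ) / p.toReal) * (t ^ (-sigmaStar N α β) * Real.log t))) ∧
      (1 < γ → eLpNorm (fun x => mildSol N α β G f x t) p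
          (volume.restrict {x : Euc N | ν * g t < ‖x‖ ∧ ‖x‖ < μ * g t}) ≤ ENNReal.ofReal (C * g t ^ ((N : ℝ) / p.toReal) * (t ^ (-sigmaStar N α β)))) := by
  intro ν μ hν hνμ
  have hμ : 0 < μ := hν.trans hνμ
  have : NeZero N := ⟨by omega⟩
  have hσ1 : sigmaStar N α β < 1 := sigmaStar_lt_one hα0 hβ0 h2β
  have hG := abs_le_of_le_inside_of_le_rpow_outside hC₁.le (by positivity) hGpos
    (hGin₁ (by linarith)) hGout
  obtain ⟨A, hA, hJ⟩ :=
    integral_sub_rpow_neg_mul_one_add_rpow_neg_le (sigmaStar_pos_s8 hα0 hα1 hβ0) hσ1 γ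
  set D := (volume (Metric.ball (0 : Euc N) 1)).toReal ^ p.toReal⁻¹
  have hD : 0 < D := rpow_pos_of_pos (ENNReal.toReal_pos (Metric.measure_ball_pos _ _ one_pos).ne'
    measure_ball_lt_top.ne) _
  refine ⟨μ ^ ((N : ℝ) / p.toReal) * D * (C₁ * C₀ * A), 3, by positivity, by norm_num,
    fun t ht => ?_⟩
  have ht0 : 0 < t := by linarith
  have hg := hgpos t ht0
  set S := {x : Euc N | ν * g t < ‖x‖ ∧ ‖x‖ < μ * g t}
  have hball := eLpNorm_restrict_le_of_subset_ball volume p (u := fun x => mildSol N α β G f x t)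
    (S := S) (r := μ * g t) (by positivity) (fun x hx => mem_ball_zero_iff.2 hx.2)
    (.of_forall fun x => abs_mildSol_le hG hfm hC₀.le hf1 hσ1 x ht0)
  rw [finrank_euclideanSpace_fin, mul_rpow hμ.le hg.le] at hball
  have key : eLpNorm (fun x => mildSol N α β G f x t) p (volume.restrict S) ≤
      ENNReal.ofReal (μ ^ ((N : ℝ) / p.toReal) * D * (C₁ * C₀ * A) * g t ^ ((N : ℝ) / p.toReal) *
        (t ^ (-sigmaStar N α β) * timeGrowth γ t)) := by
    refine hball.trans (ENNReal.ofReal_le_ofReal ?_)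
    calc _ ≤ μ ^ ((N : ℝ) / p.toReal) * g t ^ ((N : ℝ) / p.toReal) * D *
          (C₁ * C₀ * (A * (t ^ (-sigmaStar N α β) * timeGrowth γ t))) := by
          gcongr
          exact hJ t ht
      _ = _ := by ring
  refine ⟨fun hγ => ?_, fun hγ => ?_, fun hγ => ?_⟩
  · rwa [timeGrowth, if_pos hγ, ← rpow_add ht0, ← add_sub_assoc] at key
  · rwa [timeGrowth, if_neg hγ.not_lt, if_pos hγ] at key
  · rwa [timeGrowth, if_neg (not_lt.2 hγ.le), if_neg hγ.ne', mul_one] at key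

theorem intermediate_upper_N_lt_2beta
    (N : ℕ) (hN : 1 ≤ N) (α β : ℝ) (hα0 : 0 < α) (hα1 : α < 1)
    (hβ0 : 0 < β) (hβ1 : β ≤ 1) (hNβ : (N : ℝ) ≤ 4 * β)
    (G : Euc N → ℝ) (C₁ : ℝ) (hC₁ : 0 < C₁)
    (hGcont : ContinuousOn G {(0 : Euc N)}ᶜ)
    (hGpos : ∀ ξ : Euc N, ξ ≠ 0 → 0 < G ξ)
    (hGin₁ : (N : ℝ) < 4 * β → ∀ ξ : Euc N, ξ ≠ 0 → ‖ξ‖ ≤ 1 → G ξ ≤ C₁)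
    (hGin₂ : (N : ℝ) = 4 * β → ∀ ξ : Euc N, ξ ≠ 0 → ‖ξ‖ ≤ 1 →
      G ξ ≤ C₁ * (1 + |Real.log ‖ξ‖|))
    (hGout : ∀ ξ : Euc N, 1 ≤ ‖ξ‖ → G ξ ≤ C₁ * ‖ξ‖ ^ (-((N : ℝ) + 2 * β)))
    (γ : ℝ) (f : Euc N → ℝ → ℝ) (hfm : Measurable (Function.uncurry f))
    (C₀ : ℝ) (hC₀ : 0 < C₀)
    (hf1 : ∀ t : ℝ, 0 < t →
      (∫⁻ y, ENNReal.ofReal |f y t|) ≤ ENNReal.ofReal (C₀ * (1 + t) ^ (-γ)))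
    (p : ℝ≥0∞) (hp1 : 1 ≤ p)
    (g : ℝ → ℝ) (hgm : Measurable g) (hgpos : ∀ t : ℝ, 0 < t → 0 < g t)
    (hgtop : Filter.Tendsto g Filter.atTop Filter.atTop)
    (hgo : Filter.Tendsto (fun t => g t / t ^ thetaV α β) Filter.atTop (nhds 0))
    (h2β : (N : ℝ) < 2 * β) :
    ∀ ν μ : ℝ, 0 < ν → ν < μ → ∃ C T : ℝ, 0 < C ∧ 2 ≤ T ∧ ∀ t : ℝ, T ≤ t →
      (γ < 1 → eLpNorm (fun x => mildSol N α β G f x t) p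
          (volume.restrict {x : Euc N | ν * g t < ‖x‖ ∧ ‖x‖ < μ * g t}) ≤ ENNReal.ofReal (C * g t ^ ((N : ℝ) / p.toReal) * (t ^ (-sigmaStar N α β + 1 - γ)))) ∧
      (γ = 1 → eLpNorm (fun x => mildSol N α β G f x t) p
          (volume.restrict {x : Euc N | ν * g t < ‖x‖ ∧ ‖x‖ < μ * g t}) ≤ ENNReal.ofReal (C * g t ^ ((N : ℝ) / p.toReal) * (t ^ (-sigmaStar N α β) * Real.log t))) ∧
      (1 < γ → eLpNorm (fun x => mildSol N α β G f x t) p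
          (volume.restrict {x : Euc N | ν * g t < ‖x‖ ∧ ‖x‖ < μ * g t}) ≤ ENNReal.ofReal (C * g t ^ ((N : ℝ) / p.toReal) * (t ^ (-sigmaStar N α β)))) :=
  intermediate_upper_N_lt_2beta_general N hN α β hα0 hα1 hβ0 G C₁ hC₁ hGpos hGin₁ hGout γ f hfm C₀
    hC₀ hf1 p g hgpos h2β
end
end
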